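/- Let A, N_1,…,N_m ∈ ℝ^{n×n}, X ∈ ℝ^{n×q}, C ∈ ℝ^{p×n}, γ > 0, and let P, Q ∈ ℝ^{n×n} satisfy the generalized Lyapunov equations A P + P A^⊤ + γ^{-2} Σ_{k=1}^m N_k P N_k^⊤ = −X X^⊤ and A^⊤ Q + Q A + γ^{-2} Σ_{k=1}^m N_k^⊤ Q N_k = −C^⊤ C. Then tr(C P C^⊤) = tr(X^⊤ Q X). -/
import Mathlib


open Matrix

set_option linter.unusedVariables false

/-- trace identity relating the two generalized Lyapunov equations:
`tr(C P Cᵀ) = tr(Xᵀ Q X)`. -/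
theorem gramian_trace_identity
    {n q p m : ℕ} (γ : ℝ) (hγ : 0 < γ)
    (A : Matrix (Fin n) (Fin n) ℝ) (N : Fin m → Matrix (Fin n) (Fin n) ℝ)
    (X : Matrix (Fin n) (Fin q) ℝ) (C : Matrix (Fin p) (Fin n) ℝ)
    (P Q : Matrix (Fin n) (Fin n) ℝ)
    (hP : A * P + P * Aᵀ + (γ ^ 2)⁻¹ • ∑ k, N k * P * (N k)ᵀ = -(X * Xᵀ))
    (hQ : Aᵀ * Q + Q * A + (γ ^ 2)⁻¹ • ∑ k, (N k)ᵀ * Q * N k = -(Cᵀ * C)) :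
    (C * P * Cᵀ).trace = (Xᵀ * Q * X).trace := by
  have hc : Cᵀ * C = -(Aᵀ * Q + Q * A + (γ ^ 2)⁻¹ • ∑ k, (N k)ᵀ * Q * N k) := by
    rw [hQ, neg_neg]
  have hx : X * Xᵀ = -(A * P + P * Aᵀ + (γ ^ 2)⁻¹ • ∑ k, N k * P * (N k)ᵀ) := by
    rw [hP, neg_neg]
  have h1 : (C * P * Cᵀ).trace = ((Cᵀ * C) * P).trace := by
    rw [trace_mul_cycle]
  have h2 : (Xᵀ * Q * X).trace = ((X * Xᵀ) * Q).trace := by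
    rw [trace_mul_cycle]
  rw [h1, h2, hc, hx]
  simp only [neg_mul, trace_neg, add_mul, smul_mul_assoc, Finset.sum_mul,
    trace_add, trace_smul, trace_sum, neg_add_rev, neg_inj]
  have e1 : (Aᵀ * Q * P).trace = (P * Aᵀ * Q).trace := by
    rw [trace_mul_cycle]
  have e2 : (Q * A * P).trace = (A * P * Q).trace := by
    rw [trace_mul_cycle, trace_mul_cycle]
  have e3 : ∀ k, ((N k)ᵀ * Q * N k * P).trace = (N k * P * (N k)ᵀ * Q).trace := by
    intro k
    rw [mul_assoc ((N k)ᵀ * Q), trace_mul_comm, mul_assoc, mul_assoc, trace_mul_comm (N k), ← mul_assoc, ← mul_assoc, ← trace_mul_cycle Q (N k) (P * (N k)ᵀ), ← trace_mul_cycle (N k) (P * (N k)ᵀ) Q, ← mul_assoc]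
  rw [e1, e2, Finset.sum_congr rfl fun k _ => e3 k]
  ring
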